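/- arXiv:2007.13210 — 4 statements merged into one kernel-verified Lean document; each statement's English description precedes it below -/
import Mathlib

section
/- Let d ∈ {2,3} and s ∈ [0, 1/2]. There exists a constant C > 0, depending only on d and s, such that for all k, t > 0 with kt ≥ 1 and all measurable functions F, G : ℝ^d → [0, ∞), ∫_{Ω_I} k² (1 + ‖ξ‖²)^s / |den_{k,t}(ξ)| · F(ξ) G(ξ) dξ ≤ C k^{2s} t^{2s−2} ‖F‖_{L²(ℝ^d)} ‖G‖_{L²(ℝ^d)}, where Ω_I := {ξ ∈ ℝ^d : |‖ξ⁻‖ − kt| > kt/2}. -/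
open MeasureTheory
open scoped ENNReal

/-- `‖ξ⁻‖`, the Euclidean norm of the first `d − 1` coordinates of `ξ ∈ ℝ^d`. -/
noncomputable def xiMinusNorm {d : ℕ} (ξ : EuclideanSpace ℝ (Fin d)) : ℝ :=
  Real.sqrt (∑ i ∈ Finset.univ.filter (fun i : Fin d => (i : ℕ) < d - 1), ξ i ^ 2)

/-- `ξ_d`, the last coordinate of `ξ ∈ ℝ^d`. -/
noncomputable def xiLast {d : ℕ} (hd : 0 < d) (ξ : EuclideanSpace ℝ (Fin d)) : ℝ :=
  ξ ⟨d - 1, Nat.sub_lt hd one_pos⟩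

/-- The symbol denominator `den_{k,t}(ξ) = (‖ξ⁻‖² − k²t² + ξ_d²) + 2ik√(t²+1)ξ_d`. -/
noncomputable def denom (k t : ℝ) {d : ℕ} (hd : 0 < d) (ξ : EuclideanSpace ℝ (Fin d)) : ℂ :=
  ((xiMinusNorm ξ ^ 2 - k ^ 2 * t ^ 2 + xiLast hd ξ ^ 2 : ℝ) : ℂ)
    + 2 * Complex.I * (k : ℂ) * (Real.sqrt (t ^ 2 + 1) : ℂ) * (xiLast hd ξ : ℂ)

/-!
Away from the characteristic set `‖ξ⁻‖ = kt`, the modulus of `den_{k,t}(ξ)` dominates both `k²t²`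
and `1 + ‖ξ‖²` (up to the factor 7): when `‖ξ⁻‖²` is far from `k²t²`, either the real part
`‖ξ⁻‖² − k²t² + ξ_d²` is large, or `ξ_d² ≍ k²t²` and the imaginary part `2k√(t²+1) ξ_d` is.
Interpolating, `k² (1 + ‖ξ‖²)^s = k^{2s} t^{2s−2} (k²t²)^{1−s} (1 + ‖ξ‖²)^s ≤ 7 k^{2s} t^{2s−2} |den|`,
so the multiplier is bounded on `Ω_I` and Cauchy–Schwarz gives the estimate.
-/

lemma xiMinusNorm_sq_add_xiLast_sq {d : ℕ} (hd : 0 < d) (ξ : EuclideanSpace ℝ (Fin d)) :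
    xiMinusNorm ξ ^ 2 + xiLast hd ξ ^ 2 = ‖ξ‖ ^ 2 := by
  have h_last : Finset.univ.filter (fun i : Fin d => ¬ (i : ℕ) < d - 1)
      = {(⟨d - 1, Nat.sub_lt hd one_pos⟩ : Fin d)} := by
    ext i
    simp only [Finset.mem_filter, Finset.mem_univ, true_and, Finset.mem_singleton, Fin.ext_iff]
    have := i.isLt
    omega
  rw [EuclideanSpace.norm_sq_eq, xiMinusNorm, xiLast,
    Real.sq_sqrt (Finset.sum_nonneg fun i _ => sq_nonneg _),
    ← Finset.sum_filter_add_sum_filter_not Finset.univ (fun i : Fin d => (i : ℕ) < d - 1), h_last,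
    Finset.sum_singleton]
  simp only [Real.norm_eq_abs, sq_abs]

section denom

variable (k t : ℝ) {d : ℕ} (hd : 0 < d) (ξ : EuclideanSpace ℝ (Fin d))

lemma denom_re : (denom k t hd ξ).re = xiMinusNorm ξ ^ 2 - k ^ 2 * t ^ 2 + xiLast hd ξ ^ 2 := by
  simp [denom, -Complex.ofReal_pow]

lemma denom_im : (denom k t hd ξ).im = 2 * k * Real.sqrt (t ^ 2 + 1) * xiLast hd ξ := by
  simp [denom, -Complex.ofReal_pow]

lemma abs_denom_re_le : |xiMinusNorm ξ ^ 2 - k ^ 2 * t ^ 2 + xiLast hd ξ ^ 2| ≤ ‖denom k t hd ξ‖ :=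
  denom_re k t hd ξ ▸ Complex.abs_re_le_norm _

lemma four_mul_sq_mul_xiLast_sq_le_norm_denom_sq :
    4 * (k ^ 2 * t ^ 2) * xiLast hd ξ ^ 2 ≤ ‖denom k t hd ξ‖ ^ 2 := by
  have h_sqrt : Real.sqrt (t ^ 2 + 1) ^ 2 = t ^ 2 + 1 := Real.sq_sqrt (by positivity)
  rw [Complex.sq_norm, Complex.normSq_apply, denom_re, denom_im]
  nlinarith [sq_nonneg (xiMinusNorm ξ ^ 2 - k ^ 2 * t ^ 2 + xiLast hd ξ ^ 2),
    sq_nonneg (k * xiLast hd ξ)]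

end denom

/-- Here `r = ‖ξ⁻‖`, `a = ξ_d`, `K = k²t²`, and `D` is anything dominating both the real part
`|r² − K + a²|` and the imaginary part `2√K |a|` of the denominator. -/
lemma le_seven_mul_of_sq_far {r a K D : ℝ} (hK : 1 ≤ K) (hr : r ^ 2 < K / 4 ∨ 9 * K / 4 < r ^ 2)
    (h_re : |r ^ 2 - K + a ^ 2| ≤ D) (h_im : 4 * K * a ^ 2 ≤ D ^ 2) :
    K ≤ 7 * D ∧ 1 + r ^ 2 + a ^ 2 ≤ 7 * D := by
  obtain ⟨h_re_lower, h_re_upper⟩ := abs_le.mp h_re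
  rcases hr with hr | hr
  · rcases le_or_gt (a ^ 2) (K / 2) with ha | ha
    · constructor <;> nlinarith
    rcases le_or_gt (a ^ 2) (2 * K) with ha' | ha'
    · have hKD : K ≤ D := by nlinarith
      constructor <;> nlinarith
    · constructor <;> nlinarith
  · constructor <;> nlinarith

lemma rpow_one_sub_mul_rpow_le {A N B s : ℝ} (hA : 0 ≤ A) (hN : 0 ≤ N) (hs : 0 ≤ s) (hs' : s ≤ 1)
    (hAB : A ≤ B) (hNB : N ≤ B) : A ^ (1 - s) * N ^ s ≤ B := by
  have hB : 0 ≤ B := hA.trans hAB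
  calc A ^ (1 - s) * N ^ s ≤ B ^ (1 - s) * B ^ s := by gcongr
    _ = B := by rw [← Real.rpow_add_of_nonneg hB (by linarith) hs]; norm_num

lemma rpow_mul_rpow_mul_sq_mul_sq_rpow {k t : ℝ} (hk : 0 < k) (ht : 0 < t) (s : ℝ) :
    k ^ (2 * s) * t ^ (2 * s - 2) * (k ^ 2 * t ^ 2) ^ (1 - s) = k ^ 2 := by
  rw [Real.mul_rpow (by positivity) (by positivity), ← Real.rpow_natCast k 2,
    ← Real.rpow_natCast t 2, ← Real.rpow_mul hk.le, ← Real.rpow_mul ht.le,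
    mul_mul_mul_comm, ← Real.rpow_add hk, ← Real.rpow_add ht]
  ring_nf
  simp

lemma symbol_le_on_far_region {d : ℕ} (hd : 0 < d) {s k t : ℝ} (hs : 0 ≤ s) (hs' : s ≤ 1)
    (hk : 0 < k) (ht : 0 < t) (hkt : 1 ≤ k * t) {ξ : EuclideanSpace ℝ (Fin d)}
    (hξ : k * t / 2 < |xiMinusNorm ξ - k * t|) :
    k ^ 2 * (1 + ‖ξ‖ ^ 2) ^ s / ‖denom k t hd ξ‖ ≤ 7 * k ^ (2 * s) * t ^ (2 * s - 2) := by
  have hr : 0 ≤ xiMinusNorm ξ := Real.sqrt_nonneg _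
  have h_far : xiMinusNorm ξ ^ 2 < k ^ 2 * t ^ 2 / 4 ∨ 9 * (k ^ 2 * t ^ 2) / 4 < xiMinusNorm ξ ^ 2 := by
    rcases lt_abs.mp hξ with h | h
    · right; nlinarith
    · left; nlinarith
  obtain ⟨hK, hN⟩ := le_seven_mul_of_sq_far (by nlinarith) h_far (abs_denom_re_le k t hd ξ)
    (four_mul_sq_mul_xiLast_sq_le_norm_denom_sq k t hd ξ)
  rw [add_assoc, xiMinusNorm_sq_add_xiLast_sq] at hN
  have hD : 0 < ‖denom k t hd ξ‖ := by nlinarith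
  rw [div_le_iff₀ hD]
  calc k ^ 2 * (1 + ‖ξ‖ ^ 2) ^ s
      = k ^ (2 * s) * t ^ (2 * s - 2) * ((k ^ 2 * t ^ 2) ^ (1 - s) * (1 + ‖ξ‖ ^ 2) ^ s) := by
        rw [← mul_assoc, rpow_mul_rpow_mul_sq_mul_sq_rpow hk ht]
    _ ≤ k ^ (2 * s) * t ^ (2 * s - 2) * (7 * ‖denom k t hd ξ‖) := by
        refine mul_le_mul_of_nonneg_left ?_ (by positivity)
        exact rpow_one_sub_mul_rpow_le (by positivity) (by positivity) hs hs' hK hN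
    _ = 7 * k ^ (2 * s) * t ^ (2 * s - 2) * ‖denom k t hd ξ‖ := by ring

lemma lintegral_ofReal_abs_mul_ofReal_abs_le {α : Type*} [MeasurableSpace α] (μ : Measure α)
    {F G : α → ℝ} (hF : Measurable F) (hG : Measurable G) :
    ∫⁻ x, ENNReal.ofReal |F x| * ENNReal.ofReal |G x| ∂μ
      ≤ (∫⁻ x, ENNReal.ofReal (F x ^ 2) ∂μ) ^ (1 / 2 : ℝ)
        * (∫⁻ x, ENNReal.ofReal (G x ^ 2) ∂μ) ^ (1 / 2 : ℝ) := by
  have h_sq (H : α → ℝ) (x : α) : ENNReal.ofReal |H x| ^ (2 : ℝ) = ENNReal.ofReal (H x ^ 2) := by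
    rw [ENNReal.rpow_two, ← ENNReal.ofReal_pow (abs_nonneg _), sq_abs]
  simpa [h_sq] using ENNReal.lintegral_mul_le_Lp_mul_Lq μ Real.HolderConjugate.two_two
    (ENNReal.measurable_ofReal.comp hF.abs).aemeasurable
    (ENNReal.measurable_ofReal.comp hG.abs).aemeasurable

lemma setLIntegral_ofReal_mul_mul_le {α : Type*} [MeasurableSpace α] (μ : Measure α) {S : Set α}
    {q F G : α → ℝ} {C : ℝ} (hq : ∀ x ∈ S, 0 ≤ q x ∧ q x ≤ C) (hF : Measurable F)
    (hG : Measurable G) :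
    ∫⁻ x in S, ENNReal.ofReal (q x * F x * G x) ∂μ
      ≤ ENNReal.ofReal C * (∫⁻ x, ENNReal.ofReal (F x ^ 2) ∂μ) ^ (1 / 2 : ℝ)
        * (∫⁻ x, ENNReal.ofReal (G x ^ 2) ∂μ) ^ (1 / 2 : ℝ) := by
  have h_pointwise : ∀ x ∈ S, ENNReal.ofReal (q x * F x * G x)
      ≤ ENNReal.ofReal C * (ENNReal.ofReal |F x| * ENNReal.ofReal |G x|) := by
    intro x hx
    obtain ⟨hq0, hqC⟩ := hq x hx
    have hC : 0 ≤ C := hq0.trans hqC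
    rw [← ENNReal.ofReal_mul (abs_nonneg _), ← ENNReal.ofReal_mul hC]
    refine ENNReal.ofReal_le_ofReal ?_
    calc q x * F x * G x ≤ q x * (|F x| * |G x|) := by
          rw [mul_assoc, ← abs_mul]; exact mul_le_mul_of_nonneg_left (le_abs_self _) hq0
      _ ≤ C * (|F x| * |G x|) := by gcongr
  calc ∫⁻ x in S, ENNReal.ofReal (q x * F x * G x) ∂μ
      ≤ ∫⁻ x in S, ENNReal.ofReal C * (ENNReal.ofReal |F x| * ENNReal.ofReal |G x|) ∂μ :=
        setLIntegral_mono (by fun_prop) h_pointwise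
    _ ≤ ∫⁻ x, ENNReal.ofReal C * (ENNReal.ofReal |F x| * ENNReal.ofReal |G x|) ∂μ :=
        setLIntegral_le_lintegral _ _
    _ = ENNReal.ofReal C * ∫⁻ x, ENNReal.ofReal |F x| * ENNReal.ofReal |G x| ∂μ :=
        lintegral_const_mul' _ _ ENNReal.ofReal_ne_top
    _ ≤ _ := by
        rw [mul_assoc]
        exact mul_le_mul_right (lintegral_ofReal_abs_mul_ofReal_abs_le μ hF hG) _

/-- Estimate of the term `I`: the integral over the region
`Ω_I = {ξ : |‖ξ⁻‖ − kt| > kt/2}` away from the characteristic sphere. -/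
theorem stmt_3 (d : ℕ) (hd : d = 2 ∨ d = 3) (s : ℝ) (hs : 0 ≤ s) (hs' : s ≤ 1 / 2) :
    ∃ C > (0 : ℝ), ∀ k t : ℝ, 0 < k → 0 < t → 1 ≤ k * t →
      ∀ F G : EuclideanSpace ℝ (Fin d) → ℝ, Measurable F → Measurable G →
        (∀ ξ, 0 ≤ F ξ) → (∀ ξ, 0 ≤ G ξ) →
        (∫⁻ ξ in {ξ | k * t / 2 < |xiMinusNorm ξ - k * t|},
            ENNReal.ofReal (k ^ 2 * (1 + ‖ξ‖ ^ 2) ^ s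
              / ‖denom k t (by omega) ξ‖ * F ξ * G ξ)) ≤
          ENNReal.ofReal (C * k ^ (2 * s) * t ^ (2 * s - 2))
            * (∫⁻ ξ, ENNReal.ofReal (F ξ ^ 2)) ^ (1 / 2 : ℝ)
            * (∫⁻ ξ, ENNReal.ofReal (G ξ ^ 2)) ^ (1 / 2 : ℝ) := by
  refine ⟨7, by norm_num, fun k t hk ht hkt F G hF hG _ _ => ?_⟩
  refine setLIntegral_ofReal_mul_mul_le volume (fun ξ hξ => ⟨by positivity, ?_⟩) hF hG
  exact symbol_le_on_far_region _ hs (by linarith) hk ht hkt hξ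
end

section
/- There exists an absolute constant C > 0 such that for all k, t > 0, all a ∈ (kt, 3kt/2), all real c with c² < k²t²/4, and a' := 2kt − a, one has |k²/((a² − k²t² + c²) + 2ik√(t²+1)c) + k²/((a'² − k²t² + c²) − 2ik√(t²+1)c)| ≤ C/t². -/
/-!
With `T = kt`, `u = a - kt ∈ (0, T/2)` and `b = 2k√(t²+1) c`, the two denominators are
`z = A + ib` and `z' = A' - ib` with `A = u(u + 2T) + c²`, `A' = c² - u(2T - u)`, so
`k²/z + k²/z' = k²(A + A')/(z z')` with `A + A' = 2(u² + c²)`. Since `b² ≥ 4T²c²`, both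
`|z|²` and `|z'|²` are bounded below by multiples of `T²(u² + c²)`, which cancels against
the numerator and leaves `(4/3)/t²`.
-/

open Complex

lemma norm_div_add_div_sub_mul_I_le {x A A' b D : ℝ} (hD : 0 < D)
    (h : D ^ 2 ≤ (A ^ 2 + b ^ 2) * (A' ^ 2 + b ^ 2)) :
    ‖(x : ℂ) / (A + b * I) + x / (A' - b * I)‖ ≤ |x| * |A + A'| / D := by
  have hz' : (A' : ℂ) - b * I = ((A' : ℝ) : ℂ) + ((-b : ℝ) : ℂ) * I := by push_cast; ring
  have hnorm : ‖(A : ℂ) + b * I‖ * ‖(A' : ℂ) - b * I‖ =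
      √((A ^ 2 + b ^ 2) * (A' ^ 2 + b ^ 2)) := by
    rw [hz', norm_add_mul_I, norm_add_mul_I, neg_sq, ← Real.sqrt_mul (by positivity)]
  have hprod_pos : 0 < ‖(A : ℂ) + b * I‖ * ‖(A' : ℂ) - b * I‖ := by
    rw [hnorm]; exact Real.sqrt_pos.2 (by nlinarith)
  have hz₁ : (A : ℂ) + b * I ≠ 0 :=
    norm_pos_iff.1 (pos_of_mul_pos_left hprod_pos (norm_nonneg _))
  have hz₂ : (A' : ℂ) - b * I ≠ 0 :=
    norm_pos_iff.1 (pos_of_mul_pos_right hprod_pos (norm_nonneg _))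
  have hsum : (x : ℂ) / (A + b * I) + x / (A' - b * I) =
      ((x * (A + A') : ℝ) : ℂ) / ((A + b * I) * (A' - b * I)) := by
    rw [div_add_div _ _ hz₁ hz₂]; push_cast; ring
  have hD_le : D ≤ ‖(A : ℂ) + b * I‖ * ‖(A' : ℂ) - b * I‖ := by
    rw [hnorm]; exact Real.le_sqrt_of_sq_le h
  rw [hsum, norm_div, norm_mul, norm_real, Real.norm_eq_abs, abs_mul]
  exact div_le_div_of_nonneg_left (by positivity) hD hD_le

section
variable {T a c b : ℝ}

lemma four_sq_mul_le_sq_add_sq (hT : 0 < T) (ha : T < a) (hb : 4 * T ^ 2 * c ^ 2 ≤ b ^ 2) :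
    4 * T ^ 2 * ((a - T) ^ 2 + c ^ 2) ≤ (a ^ 2 - T ^ 2 + c ^ 2) ^ 2 + b ^ 2 := by
  have hA : 2 * T * (a - T) ≤ a ^ 2 - T ^ 2 + c ^ 2 := by nlinarith
  nlinarith [mul_pos hT (sub_pos.2 ha)]

lemma nine_sixteenths_sq_mul_le_sq_add_sq (hT : 0 < T) (ha₁ : T < a) (ha₂ : a < 3 * T / 2)
    (hb : 4 * T ^ 2 * c ^ 2 ≤ b ^ 2) :
    9 / 16 * T ^ 2 * ((a - T) ^ 2 + c ^ 2) ≤ ((2 * T - a) ^ 2 - T ^ 2 + c ^ 2) ^ 2 + b ^ 2 := by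
  set u := a - T
  set s := 3 * T - a
  have hu : 0 < u := sub_pos.2 ha₁
  have hs : 3 / 2 * T < s := by linarith
  have hA' : (2 * T - a) ^ 2 - T ^ 2 + c ^ 2 = c ^ 2 - u * s := by ring
  rw [hA']
  -- Either `A' = c² - us` is far below zero, or `c²` is comparable to `u²` and `b²` dominates.
  rcases le_or_gt (c ^ 2) (u * s / 2) with hc | hc
  · have hus : 0 ≤ u * s / 2 := by nlinarith
    have hA'_sq : (u * s / 2) ^ 2 ≤ (c ^ 2 - u * s) ^ 2 := by nlinarith
    have hs_sq : 9 / 4 * T ^ 2 ≤ s ^ 2 := by nlinarith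
    nlinarith [mul_le_mul_of_nonneg_left hs_sq (sq_nonneg u)]
  · have hus : 3 * u ^ 2 ≤ u * s := by nlinarith
    nlinarith [sq_nonneg (c ^ 2 - u * s), mul_le_mul_of_nonneg_left hus (sq_nonneg T)]

end

/-- Pointwise bound `|m_t(ξ) + m_t(ξ*)| ≲ 1/t²` on the region
`Ω₂ = {ξ : kt < ‖ξ⁻‖ < 3kt/2, |ξ_d| < kt/2}` in the two-dimensional case,
with `a = ‖ξ⁻‖`, `a' = 2kt − a` and `c = ξ_d`. -/
theorem stmt_12 :
    ∃ C > (0 : ℝ), ∀ k t : ℝ, 0 < k → 0 < t →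
      ∀ a : ℝ, k * t < a → a < 3 * k * t / 2 →
        ∀ c : ℝ, c ^ 2 < k ^ 2 * t ^ 2 / 4 →
          ‖(k : ℂ) ^ 2 / (((a ^ 2 - k ^ 2 * t ^ 2 + c ^ 2 : ℝ) : ℂ)
                + 2 * Complex.I * (k : ℂ) * (Real.sqrt (t ^ 2 + 1) : ℂ) * (c : ℂ))
              + (k : ℂ) ^ 2 / ((((2 * k * t - a) ^ 2 - k ^ 2 * t ^ 2 + c ^ 2 : ℝ) : ℂ)
                - 2 * Complex.I * (k : ℂ) * (Real.sqrt (t ^ 2 + 1) : ℂ) * (c : ℂ))‖ ≤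
            C / t ^ 2 := by
  refine ⟨4 / 3, by norm_num, fun k t hk ht a ha₁ ha₂ c _ => ?_⟩
  set T := k * t
  set b := 2 * k * √(t ^ 2 + 1) * c
  have hT : 0 < T := mul_pos hk ht
  have hu : 0 < a - T := sub_pos.2 ha₁
  have hb : 4 * T ^ 2 * c ^ 2 ≤ b ^ 2 := by
    have : b ^ 2 = 4 * k ^ 2 * (t ^ 2 + 1) * c ^ 2 := by
      simp only [b, mul_pow, Real.sq_sqrt (by positivity : (0 : ℝ) ≤ t ^ 2 + 1)]; ring
    rw [this]; nlinarith [sq_nonneg (k * c)]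
  have hI : 2 * I * (k : ℂ) * (√(t ^ 2 + 1) : ℂ) * (c : ℂ) = (b : ℂ) * I := by
    simp only [b]; push_cast; ring
  have hD : (3 / 2 * T ^ 2 * ((a - T) ^ 2 + c ^ 2)) ^ 2 ≤
      ((a ^ 2 - T ^ 2 + c ^ 2) ^ 2 + b ^ 2) * (((2 * T - a) ^ 2 - T ^ 2 + c ^ 2) ^ 2 + b ^ 2) :=
    calc _ = (4 * T ^ 2 * ((a - T) ^ 2 + c ^ 2)) * (9 / 16 * T ^ 2 * ((a - T) ^ 2 + c ^ 2)) := by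
          ring
      _ ≤ _ := mul_le_mul (four_sq_mul_le_sq_add_sq hT ha₁ hb)
          (nine_sixteenths_sq_mul_le_sq_add_sq hT ha₁ (by linarith) hb)
          (by positivity) (by positivity)
  have hkey := norm_div_add_div_sub_mul_I_le (x := k ^ 2) (by positivity) hD
  have hAA' : a ^ 2 - T ^ 2 + c ^ 2 + ((2 * T - a) ^ 2 - T ^ 2 + c ^ 2) =
      2 * ((a - T) ^ 2 + c ^ 2) := by ring
  rw [hI, show k ^ 2 * t ^ 2 = T ^ 2 by ring, show 2 * k * t = 2 * T by ring, ← ofReal_pow]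
  refine hkey.trans_eq ?_
  rw [hAA', abs_of_nonneg (by positivity), abs_of_nonneg (by positivity)]
  field_simp
  ring
end

section
/- There exists an absolute constant C > 0 such that for all k, t > 0, all a ∈ (kt, 3kt/2), all real c with c² < k²t²/4, and a' := 2kt − a, one has |k²/((a² − k²t² + c²) + 2ik√(t²+1)c) + (2kt/a − 1) · k²/((a'² − k²t² + c²) − 2ik√(t²+1)c)| ≤ C/t². -/
/-!
Write `δ = a − kt` and `D, D'` for the two denominators. Both have norm `≳ kt (δ + |c|)`:
the imaginary parts give `kt |c|`, the real parts `±δ(2kt ± δ) + c²` give `kt δ` up to `c² ≤ kt |c| / 2`.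
Since `J − 1 = −2δ/a` and `D + D' = 2(δ² + c²)` is real, splitting the sum as
`k²(D + D')/(D D') + (J − 1) k²/D'` bounds each part by `O(k²/(kt)²) = O(1/t²)`:
the singular factors `1/D` and `1/D'` are cancelled by the vanishing of `D + D'` and `J − 1` at `δ = c = 0`.
-/

open Complex

lemma norm_inv_add_mul_inv_le {𝕜 : Type*} [NormedField 𝕜] {z w : 𝕜} (J : 𝕜)
    (hz : z ≠ 0) (hw : w ≠ 0) :
    ‖z⁻¹ + J * w⁻¹‖ ≤ ‖z + w‖ / (‖z‖ * ‖w‖) + ‖J - 1‖ / ‖w‖ := by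
  have hsplit : z⁻¹ + J * w⁻¹ = (z + w) / (z * w) + (J - 1) * w⁻¹ := by
    rw [← inv_add_inv hz hw]; ring
  calc ‖z⁻¹ + J * w⁻¹‖ ≤ ‖(z + w) / (z * w)‖ + ‖(J - 1) * w⁻¹‖ := hsplit ▸ norm_add_le _ _
    _ = ‖z + w‖ / (‖z‖ * ‖w‖) + ‖J - 1‖ / ‖w‖ := by
      rw [norm_div, norm_mul, norm_mul, norm_inv, ← div_eq_mul_inv]

lemma abs_add_abs_le_two_mul_norm (x y : ℝ) : |x| + |y| ≤ 2 * ‖(x : ℂ) + y * I‖ := by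
  have hre := abs_re_le_norm ((x : ℂ) + y * I)
  have him := abs_im_le_norm ((x : ℂ) + y * I)
  simp only [add_re, ofReal_re, mul_re, I_re, ofReal_im, I_im, add_im, mul_im] at hre him
  norm_num at hre him
  linarith

/-- With `m = kt` and `β = k√(t² + 1)`, this is the denominator `a² − k²t² + c² + 2ikc√(t² + 1)`
of `m_t(ξ)` at `a = ‖ξ⁻‖`, `c = ξ_d`; the reflected point `ξ*` corresponds to `(2m − a, −β)`. -/
noncomputable def multiplierDenom (m a c β : ℝ) : ℂ :=
  ((a ^ 2 - m ^ 2 + c ^ 2 : ℝ) : ℂ) + ((2 * β * c : ℝ) : ℂ) * I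

section multiplierDenom

variable {m a c β : ℝ}

lemma multiplierDenom_add_reflect (m a c β : ℝ) :
    multiplierDenom m a c β + multiplierDenom m (2 * m - a) c (-β)
      = ((2 * ((a - m) ^ 2 + c ^ 2) : ℝ) : ℂ) := by
  simp only [multiplierDenom]; push_cast; ring

lemma mul_le_norm_multiplierDenom (hβ : m ≤ |β|) (ha : |a - m| ≤ m / 2) (hc : |c| ≤ m / 2) :
    3 / 4 * m * (|a - m| + |c|) ≤ ‖multiplierDenom m a c β‖ := by
  have hm : 0 ≤ m := by linarith [abs_nonneg c]
  have hre : 3 / 2 * m * |a - m| - m / 2 * |c| ≤ |a ^ 2 - m ^ 2 + c ^ 2| := by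
    have hc2 : c ^ 2 ≤ m / 2 * |c| := by
      rw [← sq_abs]; nlinarith [abs_nonneg c]
    rcases le_total m a with h | h
    · rw [abs_of_nonneg (sub_nonneg.2 h)] at ha ⊢
      nlinarith [le_abs_self (a ^ 2 - m ^ 2 + c ^ 2), abs_nonneg c, sq_nonneg c]
    · rw [abs_of_nonpos (sub_nonpos.2 h)] at ha ⊢
      nlinarith [neg_abs_le (a ^ 2 - m ^ 2 + c ^ 2)]
  have him : 2 * m * |c| ≤ |2 * β * c| := by
    rw [abs_mul, abs_mul, abs_two]; gcongr
  rw [multiplierDenom]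
  linarith [abs_add_abs_le_two_mul_norm (a ^ 2 - m ^ 2 + c ^ 2) (2 * β * c)]

lemma norm_inv_multiplierDenom_add_jacobian_mul_inv_le (hm : 0 < m) (ha₁ : m < a)
    (ha₂ : a < 3 * m / 2) (hc : |c| ≤ m / 2) (hβ : m ≤ |β|) :
    ‖(multiplierDenom m a c β)⁻¹
        + ((2 * m / a - 1 : ℝ) : ℂ) * (multiplierDenom m (2 * m - a) c (-β))⁻¹‖ ≤ 7 / m ^ 2 := by
  set δ := a - m
  have hδ : 0 < δ := sub_pos.2 ha₁
  have ha : 0 < a := hm.trans ha₁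
  have hδ' : |δ| ≤ m / 2 := by rw [abs_of_pos hδ]; linarith
  have hD := mul_le_norm_multiplierDenom (a := a) (c := c) hβ hδ' hc
  have hD' := mul_le_norm_multiplierDenom (a := 2 * m - a) (c := c) (abs_neg β ▸ hβ)
    (by rwa [show 2 * m - a - m = -δ by ring, abs_neg]) hc
  rw [show 2 * m - a - m = -δ by ring, abs_neg, abs_of_pos hδ] at hD'
  rw [abs_of_pos hδ] at hD
  have hE : 0 < 3 / 4 * m * (δ + |c|) := by positivity
  have hD₀ : multiplierDenom m a c β ≠ 0 := norm_pos_iff.1 (hE.trans_le hD)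
  have hD₀' : multiplierDenom m (2 * m - a) c (-β) ≠ 0 := norm_pos_iff.1 (hE.trans_le hD')
  have hsum : ‖multiplierDenom m a c β + multiplierDenom m (2 * m - a) c (-β)‖
      ≤ 2 * (δ + |c|) ^ 2 := by
    rw [multiplierDenom_add_reflect, norm_real, Real.norm_of_nonneg (by positivity)]
    nlinarith [sq_abs c, abs_nonneg c]
  have hJ : ‖((2 * m / a - 1 : ℝ) : ℂ) - 1‖ = 2 * δ / a := by
    rw [← ofReal_one, ← ofReal_sub, norm_real, Real.norm_eq_abs,
      show 2 * m / a - 1 - 1 = -(2 * (a - m) / a) by field_simp; ring, abs_neg,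
      abs_of_pos (by positivity)]
  refine (norm_inv_add_mul_inv_le _ hD₀ hD₀').trans ?_
  rw [hJ]
  calc _ ≤ 2 * (δ + |c|) ^ 2 / ((3 / 4 * m * (δ + |c|)) * (3 / 4 * m * (δ + |c|)))
          + 2 * δ / m / (3 / 4 * m * δ) := by
        refine add_le_add (div_le_div₀ (by positivity) hsum (by positivity)
          (mul_le_mul hD hD' hE.le (norm_nonneg _))) (div_le_div₀ (by positivity)
          (div_le_div_of_nonneg_left (by positivity) hm ha₁.le) (by positivity) ?_)
        exact hD'.trans' (by nlinarith [abs_nonneg c])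
    _ = 56 / 9 / m ^ 2 := by field_simp; ring
    _ ≤ 7 / m ^ 2 := by gcongr; norm_num

end multiplierDenom

/-- Pointwise bound `|m_t(ξ) + m_t(ξ*)J_t(ξ)| ≲ 1/t²` on the region
`Ω₂ = {ξ : kt < ‖ξ⁻‖ < 3kt/2, |ξ_d| < kt/2}` in the three-dimensional case,
with `a = ‖ξ⁻‖`, `a' = 2kt − a`, `c = ξ_d` and Jacobian factor `J_t(ξ) = 2kt/a − 1`. -/
theorem stmt_13 :
    ∃ C > (0 : ℝ), ∀ k t : ℝ, 0 < k → 0 < t →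
      ∀ a : ℝ, k * t < a → a < 3 * k * t / 2 →
        ∀ c : ℝ, c ^ 2 < k ^ 2 * t ^ 2 / 4 →
          ‖(k : ℂ) ^ 2 / (((a ^ 2 - k ^ 2 * t ^ 2 + c ^ 2 : ℝ) : ℂ)
                + 2 * Complex.I * (k : ℂ) * (Real.sqrt (t ^ 2 + 1) : ℂ) * (c : ℂ))
              + ((2 * k * t / a - 1 : ℝ) : ℂ)
                * ((k : ℂ) ^ 2 / ((((2 * k * t - a) ^ 2 - k ^ 2 * t ^ 2 + c ^ 2 : ℝ) : ℂ)
                  - 2 * Complex.I * (k : ℂ) * (Real.sqrt (t ^ 2 + 1) : ℂ) * (c : ℂ)))‖ ≤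
            C / t ^ 2 := by
  refine ⟨7, by norm_num, fun k t hk ht a ha₁ ha₂ c hc => ?_⟩
  set b := Real.sqrt (t ^ 2 + 1)
  have hkt : 0 < k * t := by positivity
  have hc' : |c| ≤ k * t / 2 :=
    (abs_lt_of_sq_lt_sq (by linarith) (by positivity)).le
  have hβ : k * t ≤ |k * b| := by
    rw [abs_of_pos (by positivity)]
    exact mul_le_mul_of_nonneg_left ((Real.le_sqrt ht.le (by positivity)).2 (by linarith)) hk.le
  have hexpr := norm_inv_multiplierDenom_add_jacobian_mul_inv_le hkt ha₁ (by linarith) hc' hβ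
  calc _ = ‖(k : ℂ) ^ 2‖ * ‖(multiplierDenom (k * t) a c (k * b))⁻¹
        + ((2 * (k * t) / a - 1 : ℝ) : ℂ)
          * (multiplierDenom (k * t) (2 * (k * t) - a) c (-(k * b)))⁻¹‖ := by
        rw [← norm_mul]; simp only [multiplierDenom]; push_cast; ring_nf
    _ ≤ k ^ 2 * (7 / (k * t) ^ 2) := by
        rw [norm_pow, norm_real, Real.norm_of_nonneg hk.le]; gcongr
    _ = 7 / t ^ 2 := by field_simp
end

section
/- Let d ∈ {2,3} and s ∈ [0, 1/2]. There exists a constant C > 0, depending only on d and s, such that for all k, t > 0, all a ∈ (kt, 3kt/2), all real c with |c| < kt/2, and a' := 2kt − a, one has (2kt/a − 1)^{d−2} · |k²/((a'² − k²t² + c²) − 2ik√(t²+1)c)| · |(1 + a'² + c²)^s − (1 + a² + c²)^s| ≤ C k^{2s} t^{2s−2}. -/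
/-!
The Jacobian factor `2kt/a - 1` lies in `[0, 1]`. Writing `δ = a - kt`, the real part of the
denominator is `c² - δ(2kt - δ)` and its imaginary part has modulus at least `2kt|c|`; so either
`c²` is small and the real part has modulus `≳ ktδ`, or `|c| > δ` and the imaginary part does.
Hence the multiplier is `≲ k/(tδ)`. By concavity of `x ↦ x^s`, and since
`1 + a'² + c² ≥ (kt/2)²`, the difference of the powers is `≲ s (kt)^(2s-2) · ktδ`.
In the product `δ` cancels, leaving `≲ k^(2s) t^(2s-2)`.
-/

open Complex

lemma Real.rpow_sub_rpow_le_mul_rpow_sub_one {x y s : ℝ} (hy : 0 < y) (hyx : y ≤ x)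
    (hs₀ : 0 ≤ s) (hs₁ : s ≤ 1) : x ^ s - y ^ s ≤ s * y ^ (s - 1) * (x - y) := by
  have hx : 0 < x := hy.trans_le hyx
  have hbernoulli := rpow_one_add_le_one_add_mul_self
    (by linarith [div_nonneg (sub_nonneg.2 hyx) hy.le] : (-1 : ℝ) ≤ (x - y) / y) hs₀ hs₁
  rw [show 1 + (x - y) / y = x / y by field_simp; ring, div_rpow hx.le hy.le,
    div_le_iff₀ (rpow_pos_of_pos hy s)] at hbernoulli
  have hys : y ^ (s - 1) * y = y ^ s := by rw [rpow_sub_one hy.ne', div_mul_cancel₀ _ hy.ne']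
  calc x ^ s - y ^ s ≤ (1 + s * ((x - y) / y)) * y ^ s - y ^ s := by linarith
    _ = s * y ^ (s - 1) * (x - y) := by rw [← hys]; field_simp; ring

lemma Real.abs_rpow_sub_rpow_le {b x y s : ℝ} (hb : 0 < b) (hbx : b ≤ x) (hxy : x ≤ y)
    (hs₀ : 0 ≤ s) (hs₁ : s ≤ 1) : |x ^ s - y ^ s| ≤ s * b ^ (s - 1) * (y - x) := by
  have hx : 0 < x := hb.trans_le hbx
  rw [abs_sub_comm, abs_of_nonneg (sub_nonneg.2 (rpow_le_rpow hx.le hxy hs₀))]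
  calc y ^ s - x ^ s ≤ s * x ^ (s - 1) * (y - x) :=
        rpow_sub_rpow_le_mul_rpow_sub_one hx hxy hs₀ hs₁
    _ ≤ s * b ^ (s - 1) * (y - x) := by
        have := rpow_le_rpow_of_nonpos hb hbx (by linarith : s - 1 ≤ 0)
        exact mul_le_mul_of_nonneg_right (mul_le_mul_of_nonneg_left this hs₀) (by linarith)

lemma le_max_abs_sq_sub_mul {m δ q c : ℝ} (hδ : 0 < δ) (hδm : δ ≤ m / 2) (hmq : m ≤ q) :
    3 / 4 * (m * δ) ≤ max |c ^ 2 - δ * (2 * m - δ)| (2 * q * |c|) := by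
  by_cases hc : c ^ 2 ≤ δ * (2 * m - δ) / 2
  · refine le_max_of_le_left (le_trans ?_ (neg_le_abs _))
    nlinarith
  · have hcδ : δ < |c| := by nlinarith [sq_abs c, abs_nonneg c]
    refine le_max_of_le_right ?_
    nlinarith [abs_nonneg c]

lemma le_norm_multiplier_denominator {k t a c : ℝ} (hk : 0 < k)
    (ha : k * t < a) (ha' : a < 3 * k * t / 2) :
    3 / 4 * (k * t * (a - k * t)) ≤
      ‖((((2 * k * t - a) ^ 2 - k ^ 2 * t ^ 2 + c ^ 2 : ℝ) : ℂ)
        - 2 * I * (k : ℂ) * (Real.sqrt (t ^ 2 + 1) : ℂ) * (c : ℂ))‖ := by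
  set z : ℂ := (((2 * k * t - a) ^ 2 - k ^ 2 * t ^ 2 + c ^ 2 : ℝ) : ℂ)
    - 2 * I * (k : ℂ) * (Real.sqrt (t ^ 2 + 1) : ℂ) * (c : ℂ)
  have hre : z.re = c ^ 2 - (a - k * t) * (2 * (k * t) - (a - k * t)) := by
    rw [sub_re, ofReal_re]; simp; ring
  have him : |z.im| = 2 * (k * Real.sqrt (t ^ 2 + 1)) * |c| := by
    rw [sub_im, ofReal_im]
    simp [abs_mul, abs_of_pos hk, abs_of_nonneg (Real.sqrt_nonneg _), mul_assoc]
  have hsqrt : k * t ≤ k * Real.sqrt (t ^ 2 + 1) := by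
    gcongr
    exact Real.le_sqrt_of_sq_le (by linarith)
  calc 3 / 4 * (k * t * (a - k * t)) ≤ max |z.re| |z.im| := by
        rw [hre, him]
        exact le_max_abs_sq_sub_mul (by linarith) (by linarith) hsqrt
    _ ≤ ‖z‖ := max_le (abs_re_le_norm z) (abs_im_le_norm z)

lemma norm_multiplier_le {k t a c : ℝ} (hk : 0 < k) (ht : 0 < t)
    (ha : k * t < a) (ha' : a < 3 * k * t / 2) :
    ‖(k : ℂ) ^ 2 / ((((2 * k * t - a) ^ 2 - k ^ 2 * t ^ 2 + c ^ 2 : ℝ) : ℂ)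
      - 2 * I * (k : ℂ) * (Real.sqrt (t ^ 2 + 1) : ℂ) * (c : ℂ))‖
      ≤ k ^ 2 / (3 / 4 * (k * t * (a - k * t))) := by
  have hδ : 0 < k * t * (a - k * t) := mul_pos (mul_pos hk ht) (by linarith)
  rw [norm_div, norm_pow, norm_real, Real.norm_of_nonneg hk.le]
  exact div_le_div_of_nonneg_left (by positivity) (by positivity)
    (le_norm_multiplier_denominator hk ha ha')

lemma abs_rpow_reflect_sub_rpow_le {k t a c s : ℝ} (hk : 0 < k) (ht : 0 < t)
    (ha : k * t < a) (ha' : a < 3 * k * t / 2) (hs₀ : 0 ≤ s) (hs₁ : s ≤ 1) :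
    |(1 + (2 * k * t - a) ^ 2 + c ^ 2) ^ s - (1 + a ^ 2 + c ^ 2) ^ s|
      ≤ s * ((k * t / 2) ^ 2) ^ (s - 1) * (4 * (k * t * (a - k * t))) := by
  have hkt : 0 < k * t := mul_pos hk ht
  have := Real.abs_rpow_sub_rpow_le (b := (k * t / 2) ^ 2)
    (x := 1 + (2 * k * t - a) ^ 2 + c ^ 2) (y := 1 + a ^ 2 + c ^ 2)
    (by positivity) (by nlinarith) (by nlinarith) hs₀ hs₁
  rwa [show 1 + a ^ 2 + c ^ 2 - (1 + (2 * k * t - a) ^ 2 + c ^ 2)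
    = 4 * (k * t * (a - k * t)) by ring] at this

lemma two_mul_div_sub_one_mem_Icc {m a : ℝ} (ha : 0 < a) (hma : m ≤ a) (ham : a ≤ 2 * m) :
    2 * m / a - 1 ∈ Set.Icc 0 1 := by
  constructor
  · rw [sub_nonneg, le_div_iff₀ ha]; linarith
  · rw [sub_le_iff_le_add, div_le_iff₀ ha]; linarith

lemma sq_mul_rpow_half_sq {k t : ℝ} (hk : 0 < k) (ht : 0 < t) (s : ℝ) :
    k ^ 2 * ((k * t / 2) ^ 2) ^ (s - 1) = 4 ^ (1 - s) * (k ^ (2 * s) * t ^ (2 * s - 2)) := by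
  have hsq {x : ℝ} (hx : 0 < x) : (x ^ 2) ^ (s - 1) = x ^ (2 * s - 2) := by
    rw [← Real.rpow_natCast, ← Real.rpow_mul hx.le]; ring_nf
  have hk2 : k ^ 2 * k ^ (2 * s - 2) = k ^ (2 * s) := by
    rw [← Real.rpow_natCast, ← Real.rpow_add hk]; ring_nf
  rw [div_pow, mul_pow, Real.div_rpow (by positivity) (by norm_num),
    Real.mul_rpow (by positivity) (by positivity), hsq hk, hsq ht, ← hk2,
    show 1 - s = -(s - 1) by ring, Real.rpow_neg (by norm_num)]
  norm_num
  ring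

theorem stmt_14_general (d : ℕ) (s : ℝ) (hs : 0 ≤ s) (hs' : s ≤ 1 / 2) :
    ∃ C > (0 : ℝ), ∀ k t : ℝ, 0 < k → 0 < t →
      ∀ a : ℝ, k * t < a → a < 3 * k * t / 2 →
        ∀ c : ℝ, |c| < k * t / 2 →
          (2 * k * t / a - 1) ^ (d - 2)
              * ‖((k : ℂ) ^ 2
                / ((((2 * k * t - a) ^ 2 - k ^ 2 * t ^ 2 + c ^ 2 : ℝ) : ℂ)
                  - 2 * Complex.I * (k : ℂ) * (Real.sqrt (t ^ 2 + 1) : ℂ) * (c : ℂ)))‖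
              * |(1 + (2 * k * t - a) ^ 2 + c ^ 2) ^ s - (1 + a ^ 2 + c ^ 2) ^ s| ≤
            C * k ^ (2 * s) * t ^ (2 * s - 2) := by
  refine ⟨32 / 3, by norm_num, fun k t hk ht a ha ha' c _ ↦ ?_⟩
  have hJ : 2 * k * t / a - 1 ∈ Set.Icc 0 1 := by
    rw [mul_assoc]; exact two_mul_div_sub_one_mem_Icc (by nlinarith) ha.le (by linarith)
  have h4 : (4 : ℝ) ^ (1 - s) ≤ 4 := by
    simpa using Real.rpow_le_rpow_of_exponent_le (by norm_num : (1 : ℝ) ≤ 4)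
      (by linarith : 1 - s ≤ 1)
  calc _ ≤ 1 * (k ^ 2 / (3 / 4 * (k * t * (a - k * t))))
        * (s * ((k * t / 2) ^ 2) ^ (s - 1) * (4 * (k * t * (a - k * t)))) := by
        gcongr
        · exact pow_le_one₀ hJ.1 hJ.2
        · exact norm_multiplier_le hk ht ha ha'
        · exact abs_rpow_reflect_sub_rpow_le hk ht ha ha' hs (by linarith)
    _ = 16 / 3 * s * (4 ^ (1 - s) * (k ^ (2 * s) * t ^ (2 * s - 2))) := by
        rw [← sq_mul_rpow_half_sq hk ht]; field_simp [(by linarith : a - k * t ≠ 0)]; ring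
    _ ≤ 16 / 3 * (1 / 2) * (4 * (k ^ (2 * s) * t ^ (2 * s - 2))) := by gcongr
    _ = 32 / 3 * k ^ (2 * s) * t ^ (2 * s - 2) := by ring

/-- Pointwise mean-value-theorem bound
`|m_t(ξ*)J_t(ξ)((1+‖ξ*‖²)^s − (1+‖ξ‖²)^s)| ≲ k^{2s}/t^{2−2s}` used to estimate the
term `II₂₂`, with `a = ‖ξ⁻‖`, `a' = 2kt − a`, `c = ξ_d` and `J_t(ξ) = (2kt/a − 1)^{d−2}`. -/
theorem stmt_14 (d : ℕ) (hd : d = 2 ∨ d = 3) (s : ℝ) (hs : 0 ≤ s) (hs' : s ≤ 1 / 2) :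
    ∃ C > (0 : ℝ), ∀ k t : ℝ, 0 < k → 0 < t →
      ∀ a : ℝ, k * t < a → a < 3 * k * t / 2 →
        ∀ c : ℝ, |c| < k * t / 2 →
          (2 * k * t / a - 1) ^ (d - 2)
              * ‖((k : ℂ) ^ 2
                / ((((2 * k * t - a) ^ 2 - k ^ 2 * t ^ 2 + c ^ 2 : ℝ) : ℂ)
                  - 2 * Complex.I * (k : ℂ) * (Real.sqrt (t ^ 2 + 1) : ℂ) * (c : ℂ)))‖
              * |(1 + (2 * k * t - a) ^ 2 + c ^ 2) ^ s - (1 + a ^ 2 + c ^ 2) ^ s| ≤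
            C * k ^ (2 * s) * t ^ (2 * s - 2) :=
  stmt_14_general d s hs hs'
end
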